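/- Let μ, r ∈ ℝ, σ > 0 and u ≥ 0. For z ∈ ℝ set A(z) := exp((μ − r − σ²/2)·u + σ·√u·z), and let γ denote the standard Gaussian measure on ℝ (mean 0, variance 1). Then for every x ∈ (0,1), 0 < ∫_ℝ A(z)/( x·A(z) + 1 − x )² dγ(z) ≤ 2·e^{(|r−μ| + σ²)·u}. -/

import Mathlib

open Set MeasureTheory ProbabilityTheory Real
open scoped ENNReal NNReal

lemma pdf_shift (t z : ℝ) :
    Real.exp (t*z) * gaussianPDFReal 0 1 z = Real.exp (t^2/2) * gaussianPDFReal t 1 z := by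
  simp only [gaussianPDFReal]
  push_cast
  rw [mul_comm (Real.exp (t*z)), mul_assoc, mul_assoc, ← Real.exp_add, mul_comm (Real.exp (t^2/2)),
    mul_assoc, ← Real.exp_add]
  ring_nf

lemma mgf_std (t : ℝ) :
    Integrable (fun z => Real.exp (t*z)) (gaussianReal 0 1) ∧
    ∫ z, Real.exp (t*z) ∂(gaussianReal 0 1) = Real.exp (t^2/2) := by
  have hpdf : gaussianPDF 0 1 = fun z => ((gaussianPDFReal 0 1 z).toNNReal : ℝ≥0∞) := by
    ext z; simp [gaussianPDF, ENNReal.ofReal]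
  have hmeas : Measurable fun z => (gaussianPDFReal 0 1 z).toNNReal :=
    (measurable_gaussianPDFReal 0 1).real_toNNReal
  have hfun : (fun z => (gaussianPDFReal 0 1 z).toNNReal • Real.exp (t*z))
      = fun z => Real.exp (t^2/2) * gaussianPDFReal t 1 z := by
    ext z
    rw [NNReal.smul_def, smul_eq_mul, Real.coe_toNNReal _ (gaussianPDFReal_nonneg 0 1 z),
      mul_comm, pdf_shift]
  rw [gaussianReal_of_var_ne_zero 0 one_ne_zero, hpdf]
  constructor
  · rw [integrable_withDensity_iff_integrable_smul hmeas, hfun]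
    exact (integrable_gaussianPDFReal t 1).const_mul _
  · rw [integral_withDensity_eq_integral_smul hmeas, hfun, integral_const_mul,
      integral_gaussianPDFReal_eq_one t one_ne_zero, mul_one]


lemma frac_exp_bounds (x t : ℝ) (hx0 : 0 < x) (hx1 : x < 1) :
    Real.exp (-|t|) ≤ Real.exp t / (x * Real.exp t + 1 - x)^2 ∧
    Real.exp t / (x * Real.exp t + 1 - x)^2 ≤ Real.exp |t| := by
  set A : ℝ := Real.exp t with hA
  clear_value A
  have hApos : 0 < A := hA ▸ Real.exp_pos _
  set d : ℝ := x * A + 1 - x with hd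
  clear_value d
  have hdpos : 0 < d := by
    rcases le_or_gt A 1 with h | h
    · nlinarith
    · nlinarith
  constructor
  · rcases le_or_gt A 1 with h | h
    · have hd1 : d ≤ 1 := by nlinarith
      have hd2 : d^2 ≤ 1 := by nlinarith
      have h2 : A ≤ A / d^2 := by
        rw [le_div_iff₀ (pow_pos hdpos 2)]
        nlinarith [mul_le_mul_of_nonneg_left hd2 hApos.le]
      refine le_trans ?_ h2
      rw [hA, Real.exp_le_exp]
      exact neg_abs_le _
    · have hdA : d ≤ A := by nlinarith
      have h2 : 1 / A ≤ A / d^2 := by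
        rw [div_le_div_iff₀ hApos (pow_pos hdpos 2)]
        nlinarith [mul_le_mul hdA hdA hdpos.le (by linarith : (0:ℝ) ≤ A)]
      refine le_trans ?_ h2
      rw [hA, one_div, ← Real.exp_neg, Real.exp_le_exp]
      exact neg_le_neg (le_abs_self _)
  · rcases le_or_gt A 1 with h | h
    · have hdA : A ≤ d := by nlinarith
      have h2 : A / d^2 ≤ 1 / A := by
        rw [div_le_div_iff₀ (pow_pos hdpos 2) hApos]
        nlinarith [mul_le_mul hdA hdA hApos.le hdpos.le]
      refine h2.trans ?_
      rw [hA, one_div, ← Real.exp_neg, Real.exp_le_exp]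
      exact neg_le_abs _
    · have hd1 : (1:ℝ) ≤ d := by nlinarith
      have hd2 : (1:ℝ) ≤ d^2 := by nlinarith
      have h2 : A / d^2 ≤ A := by
        rw [div_le_iff₀ (pow_pos hdpos 2)]
        nlinarith [mul_le_mul_of_nonneg_left hd2 hApos.le]
      refine h2.trans ?_
      rw [hA, Real.exp_le_exp]
      exact le_abs_self _

/-- The stochastic exponential factor `A(u,z) = exp((μ-r-σ²/2)u + σ√u z)`. -/
noncomputable def stochExp (μ r σ u z : ℝ) : ℝ :=
  Real.exp ((μ - r - σ^2 / 2) * u + σ * Real.sqrt u * z)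

set_option maxHeartbeats 1000000 in
/-- Bound on `E[(∂/∂x) Y_s^{(t,x)}]`: for all `x ∈ (0,1)`,
`0 < ∫ A/(xA+1−x)² dγ ≤ 2 e^{(|r−μ|+σ²)u}`, where `γ` is the standard Gaussian. -/
theorem wealthFrac_x_derivative_expectation_bound (μ r σ u : ℝ)
    (hσ : 0 < σ) (hu : 0 ≤ u) :
    ∀ x ∈ Ioo (0:ℝ) 1,
      0 < (∫ z, stochExp μ r σ u z / (x * stochExp μ r σ u z + 1 - x)^2
            ∂(gaussianReal 0 1)) ∧
      (∫ z, stochExp μ r σ u z / (x * stochExp μ r σ u z + 1 - x)^2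
            ∂(gaussianReal 0 1))
        ≤ 2 * Real.exp ((|r - μ| + σ^2) * u) := by
  intro x hx
  obtain ⟨hx0, hx1⟩ := hx
  set c : ℝ := (μ - r - σ^2/2) * u with hc
  set a : ℝ := σ * Real.sqrt u with ha
  have ha0 : 0 ≤ a := mul_nonneg hσ.le (Real.sqrt_nonneg u)
  set f : ℝ → ℝ := fun z => stochExp μ r σ u z / (x * stochExp μ r σ u z + 1 - x)^2 with hf
  -- pointwise bounds
  have key : ∀ z : ℝ, Real.exp (-(|c| + a * |z|)) ≤ f z ∧ f z ≤ Real.exp (|c| + a * |z|) := by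
    intro z
    have habs : |c + a * z| ≤ |c| + a * |z| := by
      calc |c + a * z| ≤ |c| + |a * z| := abs_add_le _ _
        _ = |c| + a * |z| := by rw [abs_mul a z, abs_of_nonneg ha0]
    have hfz : f z = Real.exp (c + a * z) / (x * Real.exp (c + a * z) + 1 - x)^2 := rfl
    obtain ⟨hlo, hhi⟩ := frac_exp_bounds x (c + a * z) hx0 hx1
    rw [hfz]
    constructor
    · refine le_trans ?_ hlo
      apply Real.exp_le_exp.2
      linarith
    · refine hhi.trans ?_
      exact Real.exp_le_exp.2 habs
  -- integrable upper bound g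
  set g : ℝ → ℝ := fun z => Real.exp |c| * (Real.exp (a * z) + Real.exp (-a * z)) with hg
  have hg_int : Integrable g (gaussianReal 0 1) :=
    (((mgf_std a).1.add (mgf_std (-a)).1).const_mul _)
  have hfg : ∀ z, f z ≤ g z := by
    intro z
    refine (key z).2.trans ?_
    simp only [hg]
    rw [Real.exp_add]
    rcases le_or_gt 0 z with h | h
    · have : Real.exp (a * |z|) = Real.exp (a * z) := by rw [abs_of_nonneg h]
      rw [this]
      have := Real.exp_pos (-a * z)
      nlinarith [Real.exp_pos |c|, Real.exp_pos (a * z)]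
    · have : Real.exp (a * |z|) = Real.exp (-a * z) := by rw [abs_of_neg h]; ring_nf
      rw [this]
      nlinarith [Real.exp_pos |c|, Real.exp_pos (a * z), Real.exp_pos (-a * z)]
  have hf_nonneg : ∀ z, 0 ≤ f z := fun z =>
    le_trans (Real.exp_pos _).le (key z).1
  have hcontA : Continuous fun z => stochExp μ r σ u z :=
    Real.continuous_exp.comp (by fun_prop)
  have hf_meas : AEStronglyMeasurable f (gaussianReal 0 1) := by
    apply Continuous.aestronglyMeasurable
    apply Continuous.div hcontA
      ((((continuous_const.mul hcontA).add continuous_const).sub continuous_const).pow 2)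
    intro z
    have hApos : (0:ℝ) < stochExp μ r σ u z := Real.exp_pos _
    have : 0 < x * stochExp μ r σ u z + 1 - x := by
      rcases le_or_gt (stochExp μ r σ u z) 1 with h | h
      · nlinarith
      · nlinarith
    exact (pow_pos this 2).ne'
  have hf_int : Integrable f (gaussianReal 0 1) := by
    refine hg_int.mono' hf_meas ?_
    filter_upwards with z
    rw [Real.norm_eq_abs, abs_of_nonneg (hf_nonneg z)]
    exact hfg z
  -- lower integrable bound h
  set h : ℝ → ℝ := fun z => Real.exp (-(|c| + a * |z|)) with hh
  have hh_int : Integrable h (gaussianReal 0 1) := by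
    refine (integrable_const (1:ℝ)).mono' ?_ ?_
    · exact (Real.continuous_exp.comp
        ((continuous_const.add (continuous_const.mul continuous_abs)).neg)).aestronglyMeasurable
    · filter_upwards with z
      rw [Real.norm_eq_abs, abs_of_nonneg (Real.exp_pos _).le]
      exact Real.exp_le_one_iff.2
        (neg_nonpos.2 (add_nonneg (abs_nonneg c) (mul_nonneg ha0 (abs_nonneg z))))
  constructor
  · -- positivity
    have h1 : ∫ z, h z ∂(gaussianReal 0 1) ≤ ∫ z, f z ∂(gaussianReal 0 1) :=
      integral_mono hh_int hf_int (fun z => (key z).1)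
    refine lt_of_lt_of_le ?_ h1
    rw [integral_pos_iff_support_of_nonneg (fun z => (Real.exp_pos _).le) hh_int]
    have : Function.support h = Set.univ := by
      ext z; simp [hh, Real.exp_ne_zero]
    rw [this]
    simp
  · -- upper bound
    have h1 : ∫ z, f z ∂(gaussianReal 0 1) ≤ ∫ z, g z ∂(gaussianReal 0 1) :=
      integral_mono hf_int hg_int hfg
    refine h1.trans ?_
    have hg_val : ∫ z, g z ∂(gaussianReal 0 1)
        = Real.exp |c| * (Real.exp (a^2/2) + Real.exp ((-a)^2/2)) := by
      rw [hg]
      rw [integral_const_mul]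
      rw [integral_add (mgf_std a).1 (mgf_std (-a)).1]
      rw [(mgf_std a).2]
      have := (mgf_std (-a)).2
      simp only [neg_mul] at this ⊢
      rw [this]
    rw [hg_val, neg_sq]
    have hsq : a^2 = σ^2 * u := by
      rw [ha, mul_pow, Real.sq_sqrt hu]
    have habs : |c| ≤ (|r - μ| + σ^2/2) * u := by
      rw [hc, abs_mul, abs_of_nonneg hu]
      have : |μ - r - σ^2/2| ≤ |r - μ| + σ^2/2 := by
        rw [← abs_neg (r - μ)]
        have h2 : |μ - r - σ^2/2| ≤ |μ - r| + |σ^2/2| := abs_sub _ _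
        have h3 : |σ^2/2| = σ^2/2 := abs_of_nonneg (by positivity)
        rw [h3] at h2
        simpa [neg_sub] using h2
      nlinarith [abs_nonneg (μ - r - σ^2/2)]
    have : Real.exp |c| * (Real.exp (a^2/2) + Real.exp (a^2/2))
        = 2 * Real.exp (|c| + a^2/2) := by
      rw [Real.exp_add]; ring
    rw [this]
    have : |c| + a^2/2 ≤ (|r - μ| + σ^2) * u := by
      rw [hsq]; nlinarith
    have := Real.exp_le_exp.2 this
    linarith
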